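/- Let R be a commutative ring, let V ≤ U be R-modules, and let Λ be a nonempty subset of R such that U/V is Λ-torsion, i.e., for every element of U/V its annihilator in R contains a finite product of elements of Λ. Let J be an ideal of R such that J + λR = R for all λ ∈ Λ. Then for each n ≥ 1: UJⁿ + V = U and UJⁿ ∩ V = VJⁿ. -/

import Mathlib

universe u v

/-- Every finitely generated subgroup of `G` can be generated by at most `r` elements;
i.e. `rk(G) ≤ r`. -/
def rankLE (G : Type*) [Group G] (r : ℕ) : Prop :=
  ∀ H : Subgroup G, H.FG →
    ∃ S : Finset G, (S : Set G) ⊆ (H : Set G) ∧ S.card ≤ r ∧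
      Subgroup.closure (S : Set G) = H

/-- `G` has finite (Prüfer) rank. -/
def HasFiniteRank (G : Type*) [Group G] : Prop :=
  ∃ r : ℕ, rankLE G r

/-- The subgroup generated by all `n`-th powers. -/
def powSubgroup (G : Type*) [Group G] (n : ℕ) : Subgroup G :=
  Subgroup.closure {g : G | ∃ x : G, x ^ n = g}

/-- `G` has polynomial index growth with exponent `α`: every finite quotient `Q = G/K`
satisfies `|Q/Qⁿ| ≤ n^α` for all `n ≥ 1`. -/
def PIGAt (G : Type*) [Group G] (α : ℝ) : Prop :=
  ∀ (K : Subgroup G) [K.Normal], K.FiniteIndex →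
    ∀ n : ℕ, 1 ≤ n →
      (Nat.card ((G ⧸ K) ⧸ powSubgroup (G ⧸ K) n) : ℝ) ≤ (n : ℝ) ^ α

/-- `G` has polynomial index growth. -/
def PIG (G : Type*) [Group G] : Prop :=
  ∃ α : ℝ, 0 ≤ α ∧ PIGAt G α

/-- `PIG(α)` for a (finite) group itself: `|G/Gⁿ| ≤ n^α` for all `n ≥ 1`. -/
def FinPIG (G : Type*) [Group G] (α : ℕ) : Prop :=
  ∀ n : ℕ, 1 ≤ n → Nat.card (G ⧸ powSubgroup G n) ≤ n ^ α

def ResiduallyFinite (G : Type*) [Group G] : Prop :=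
  ∀ g : G, g ≠ 1 → ∃ K : Subgroup G, K.Normal ∧ K.FiniteIndex ∧ g ∉ K

/-- `G` is a product of finitely many cyclic subgroups `⟨g 0⟩⟨g 1⟩⋯⟨g (k-1)⟩`. -/
def BoundedlyGenerated (G : Type*) [Group G] : Prop :=
  ∃ (k : ℕ) (g : Fin k → G), ∀ x : G, ∃ e : Fin k → ℤ,
    x = (List.ofFn fun i => g i ^ e i).prod

/-- `G/N` is polycyclic: there is a finite chain from `N` to `G`, each step normal
with cyclic factor. -/
def IsPolycyclicQuotientOf {G : Type*} [Group G] (N : Subgroup G) : Prop :=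
  ∃ (n : ℕ) (c : Fin (n + 1) → Subgroup G),
    c 0 = N ∧ c (Fin.last n) = ⊤ ∧
    ∀ i : Fin n,
      c i.castSucc ≤ c i.succ ∧
      ((c i.castSucc).subgroupOf (c i.succ)).Normal ∧
      ∃ x ∈ c i.succ, c i.succ ≤ c i.castSucc ⊔ Subgroup.zpowers x

def IsPolycyclic (G : Type*) [Group G] : Prop :=
  IsPolycyclicQuotientOf (⊥ : Subgroup G)

/-- ℚ/ℤ. -/
abbrev QmodZ : Type := ℚ ⧸ AddSubgroup.zmultiples (1 : ℚ)

/-- The Prüfer group `C_{p^∞}`: the `p`-primary torsion subgroup of ℚ/ℤ. -/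
def prufer (p : ℕ) : AddSubgroup QmodZ where
  carrier := {x | ∃ n : ℕ, p ^ n • x = 0}
  zero_mem' := ⟨0, smul_zero _⟩
  add_mem' := by
    intro a b ha hb
    obtain ⟨n, hn⟩ := ha
    obtain ⟨m, hm⟩ := hb
    refine ⟨n + m, ?_⟩
    have ha' : p ^ (n + m) • a = 0 := by
      rw [pow_add, mul_comm, mul_smul, hn, smul_zero]
    have hb' : p ^ (n + m) • b = 0 := by
      rw [pow_add, mul_smul, hm, smul_zero]
    rw [smul_add, ha', hb', add_zero]
  neg_mem' := by
    intro a ha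
    obtain ⟨n, hn⟩ := ha
    exact ⟨n, by rw [smul_neg, hn, neg_zero]⟩

/-- `G` is a minimax group: there is a finite chain `1 = G₀ ⊴ G₁ ⊴ … ⊴ Gₙ = G` whose
factors are cyclic or quasicyclic (Prüfer). -/
def IsMinimax (G : Type*) [Group G] : Prop :=
  ∃ (n : ℕ) (c : Fin (n + 1) → Subgroup G),
    c 0 = ⊥ ∧ c (Fin.last n) = ⊤ ∧
    ∀ i : Fin n,
      c i.castSucc ≤ c i.succ ∧
      ((c i.castSucc).subgroupOf (c i.succ)).Normal ∧
      ((∃ x ∈ c i.succ, c i.succ ≤ c i.castSucc ⊔ Subgroup.zpowers x) ∨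
       (∃ p : ℕ, p.Prime ∧
          ∃ φ : ↥(c i.succ) →* Multiplicative ↥(prufer p),
            Function.Surjective φ ∧ φ.ker = (c i.castSucc).subgroupOf (c i.succ)))

/-- `spec G`: set of primes `p` such that `G` has a section isomorphic to `C_{p^∞}`. -/
def groupSpec (G : Type*) [Group G] : Set ℕ :=
  {p | p.Prime ∧ ∃ (H : Subgroup G) (φ : ↥H →* Multiplicative ↥(prufer p)),
    Function.Surjective φ}

/-- `G` is residually nilpotent. -/
def ResiduallyNilpotent (G : Type*) [Group G] : Prop :=
  ∀ g : G, g ≠ 1 → ∃ K : Subgroup G, K.Normal ∧ g ∉ K ∧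
    ∃ n : ℕ, Subgroup.lowerCentralSeries (⊤ : Subgroup G) n ≤ K

/-- The upper rank of `G` is at most `r`: every finite quotient of `G` has rank at most `r`. -/
def UpperRankLE (G : Type*) [Group G] (r : ℕ) : Prop :=
  ∀ (K : Subgroup G) [K.Normal], K.FiniteIndex → rankLE (G ⧸ K) r

/-- The upper `p`-rank of `G` is at most `r`: every `p`-subgroup of a finite quotient of `G`
has rank at most `r`. -/
def UpperPRankLE (G : Type*) [Group G] (p r : ℕ) : Prop :=
  ∀ (K : Subgroup G) [K.Normal], K.FiniteIndex →
    ∀ P : Subgroup (G ⧸ K), IsPGroup p ↥P → rankLE ↥P r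

/-- Hypothesis 𝓗: every quotient of `G` possessing a residually nilpotent normal subgroup of
finite index has finite upper rank. -/
def HypothesisH (G : Type*) [Group G] : Prop :=
  ∀ (N : Subgroup G) [N.Normal],
    (∃ H : Subgroup (G ⧸ N), H.Normal ∧ H.FiniteIndex ∧ ResiduallyNilpotent ↥H) →
    ∃ r : ℕ, UpperRankLE (G ⧸ N) r

/-- number of subgroups of index at most `n`. -/
noncomputable def subgroupCount (G : Type*) [Group G] (n : ℕ) : ℕ :=
  Nat.card {H : Subgroup G // 0 < H.index ∧ H.index ≤ n}

/-- An embedding of `G` into `GL_n(F)` for some field `F` of characteristic `0`. -/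
structure LinearEmbeddingC0 (G : Type u) [Group G] : Type (u + 1) where
  n : ℕ
  F : Type
  [fieldF : Field F]
  [charF : CharZero F]
  ρ : G →* Matrix.GeneralLinearGroup (Fin n) F
  inj : Function.Injective ρ

/-- An infinite quotient of `G` embedded in `GL_n(F)`, `F` of characteristic `0`. -/
structure InfiniteLinearQuotientC0 (G : Type u) [Group G] : Type (u + 1) where
  K : Subgroup G
  [norm : K.Normal]
  n : ℕ
  F : Type
  [fieldF : Field F]
  [charF : CharZero F]
  ρ : (G ⧸ K) →* Matrix.GeneralLinearGroup (Fin n) F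
  inj : Function.Injective ρ
  inf : Infinite (G ⧸ K)

/-!
Let `S` be the multiplicative monoid generated by `Λ`. Each `s ∈ S` is comaximal with `J`, hence
with `Jⁿ`, so `1 = j + r s` with `j ∈ Jⁿ`. If `s • u ∈ V` then `u = j • u + r • (s • u)` lies in
`Jⁿ U + V`. For the intersection, `U ⧸ V` being `S`-torsion makes `Jⁿ U` be `S`-torsion modulo
`Jⁿ V`, and the same decomposition applied to `v ∈ Jⁿ U ∩ V` puts `v` in `Jⁿ V`.
-/

namespace Submodule

variable {R M : Type*} [CommSemiring R] [AddCommMonoid M] [Module R M]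

/-- The paper's "`U/V` is `S`-torsion", stated without requiring `V ≤ U`. -/
def IsTorsionModulo (S : Submonoid R) (U V : Submodule R M) : Prop :=
  ∀ u ∈ U, ∃ s ∈ S, s • u ∈ V

theorem IsTorsionModulo.mono {S : Submonoid R} {U U' V : Submodule R M}
    (h : IsTorsionModulo S U V) (hU : U' ≤ U) : IsTorsionModulo S U' V :=
  fun u hu => h u (hU hu)

theorem IsTorsionModulo.smul {S : Submonoid R} {U V : Submodule R M}
    (h : IsTorsionModulo S U V) (I : Ideal R) : IsTorsionModulo S (I • U) (I • V) := by
  intro x hx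
  refine smul_induction_on hx (fun r hr u hu => ?_) fun x y hx hy => ?_
  · obtain ⟨s, hs, hsu⟩ := h u hu
    exact ⟨s, hs, smul_comm s r u ▸ smul_mem_smul hr hsu⟩
  · obtain ⟨s, hs, hsx⟩ := hx
    obtain ⟨t, ht, hty⟩ := hy
    refine ⟨s * t, S.mul_mem hs ht, ?_⟩
    rw [smul_add, mul_comm s t, mul_smul, mul_smul t s y, smul_comm t s y]
    exact add_mem (smul_mem _ t hsx) (smul_mem _ s hty)

theorem mem_smul_sup_of_smul_mem {I : Ideal R} {s : R} (hs : IsCoprime I (Ideal.span {s}))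
    {P N : Submodule R M} {x : M} (hx : x ∈ P) (hsx : s • x ∈ N) : x ∈ I • P ⊔ N := by
  obtain ⟨j, hj, _, hrs, hjr⟩ := Ideal.isCoprime_iff_exists.mp hs
  obtain ⟨r, rfl⟩ := Ideal.mem_span_singleton'.mp hrs
  have hx_eq : x = j • x + r • s • x := by rw [smul_smul, ← add_smul, hjr, one_smul]
  rw [hx_eq]
  exact add_mem_sup (smul_mem_smul hj hx) (smul_mem _ r hsx)

theorem IsTorsionModulo.le_smul_sup {S : Submonoid R} {U V : Submodule R M}
    (h : IsTorsionModulo S U V) {I : Ideal R} (hI : ∀ s ∈ S, IsCoprime I (Ideal.span {s})) :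
    U ≤ I • U ⊔ V := fun u hu =>
  let ⟨s, hs, hsu⟩ := h u hu
  mem_smul_sup_of_smul_mem (hI s hs) hu hsu

end Submodule

theorem Ideal.isCoprime_span_singleton_of_mem_closure {R : Type*} [CommSemiring R]
    {J : Ideal R} {Λ : Set R} (hJ : ∀ l ∈ Λ, IsCoprime J (Ideal.span {l}))
    {s : R} (hs : s ∈ Submonoid.closure Λ) : IsCoprime J (Ideal.span {s}) := by
  induction hs using Submonoid.closure_induction with
  | mem l hl => exact hJ l hl
  | one => simpa [Ideal.span_singleton_one] using Ideal.isCoprime_iff_sup_eq.mpr (sup_top_eq J)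
  | mul x y _ _ hx hy => simpa [Ideal.span_singleton_mul_span_singleton] using hx.mul_right hy

open Submodule in
theorem stmt_16_general (R : Type*) [CommRing R] (M : Type*) [AddCommGroup M] [Module R M]
    (U V : Submodule R M) (hVU : V ≤ U)
    (Λ : Set R)
    (htors : ∀ u ∈ U, ∃ l : List R, l ≠ [] ∧ (∀ x ∈ l, x ∈ Λ) ∧ l.prod • u ∈ V)
    (J : Ideal R) (hJ : ∀ lam ∈ Λ, J ⊔ Ideal.span {lam} = ⊤) :
    ∀ n : ℕ, 1 ≤ n →
      (J ^ n • U) ⊔ V = U ∧ (J ^ n • U) ⊓ V = J ^ n • V := by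
  intro n _
  have hS : IsTorsionModulo (Submonoid.closure Λ) U V := fun u hu =>
    let ⟨l, _, hl, hlu⟩ := htors u hu
    ⟨l.prod, Submonoid.list_prod_mem _ fun x hx => Submonoid.subset_closure (hl x hx), hlu⟩
  have hcop : ∀ s ∈ Submonoid.closure Λ, IsCoprime (J ^ n) (Ideal.span {s}) := fun s hs =>
    (Ideal.isCoprime_span_singleton_of_mem_closure
      (fun l hl => Ideal.isCoprime_iff_sup_eq.mpr (hJ l hl)) hs).pow_left
  constructor
  · exact le_antisymm (sup_le smul_le_right hVU) (hS.le_smul_sup hcop)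
  · refine le_antisymm ?_ (le_inf (smul_mono le_rfl hVU) smul_le_right)
    calc J ^ n • U ⊓ V
        ≤ J ^ n • (J ^ n • U ⊓ V) ⊔ J ^ n • V :=
          ((hS.smul (J ^ n)).mono inf_le_left).le_smul_sup hcop
      _ ≤ J ^ n • V := sup_le (smul_mono le_rfl inf_le_right) le_rfl

/-- Lemma (jim). If `U/V` is `Λ`-torsion and `J + λR = R` for all `λ ∈ Λ`,
then `UJⁿ + V = U` and `UJⁿ ∩ V = VJⁿ`. -/
theorem stmt_16 (R : Type*) [CommRing R] (M : Type*) [AddCommGroup M] [Module R M]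
    (U V : Submodule R M) (hVU : V ≤ U)
    (Λ : Set R) (hΛ : Λ.Nonempty)
    (htors : ∀ u ∈ U, ∃ l : List R, l ≠ [] ∧ (∀ x ∈ l, x ∈ Λ) ∧ l.prod • u ∈ V)
    (J : Ideal R) (hJ : ∀ lam ∈ Λ, J ⊔ Ideal.span {lam} = ⊤) :
    ∀ n : ℕ, 1 ≤ n →
      (J ^ n • U) ⊔ V = U ∧ (J ^ n • U) ⊓ V = J ^ n • V :=
  stmt_16_general R M U V hVU Λ htors J hJ
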